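/- arXiv:2206.10018 — 5 statements merged into one kernel-verified Lean document; each statement's English description precedes it below -/
import Mathlib

section
/- Fix positive integers n, N, κ with κ ≤ N and positive integers k₁,…,kₙ, and set S = k₁ + ⋯ + kₙ. Consider triples consisting of: a subset K ⊆ {1,…,N} with |K| = κ, and for each α ∈ {1,…,n} two tuples i_α = (i_{α,1},…,i_{α,k_α}) ∈ {1,…,N}^{k_α} and j_α = (j_{α,1},…,j_{α,k_α}) ∈ {1,…,N}^{k_α}. Say that such a triple satisfies condition (1) if there exist β ∈ {1,…,n} and ℓ₀ ∈ {1,…,k_β} such that i_{β,ℓ₀} ∉ K ∪ {j_{β,1},…,j_{β,ℓ₀−1}} ∪ ⋃_{α=β+1}^n {j_{α,1},…,j_{α,k_α}} (where {j_{β,1},…,j_{β,ℓ₀−1}} is the empty set when ℓ₀ = 1), and condition (2) if j_{1,k₁} ∉ K ∪ {j_{1,1},…,j_{1,k₁−1}} ∪ ⋃_{α=2}^n {j_{α,1},…,j_{α,k_α}}. Then the number of triples for which BOTH conditions (1) and (2) fail is at most C(N,κ) · κ(κ+1)⋯(κ+S) · N^{S−1}, where C(N,κ) denotes the binomial coefficient.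 -/
namespace CountingAux

variable {n : ℕ} {k : Fin n → ℕ}

abbrev Slot (k : Fin n → ℕ) : Type := (α : Fin n) × Fin (k α)

def Before (k : Fin n → ℕ) (β : Fin n) (ℓ₀ : ℕ) (p : Slot k) : Prop :=
  β < p.1 ∨ (p.1 = β ∧ (p.2 : ℕ) < ℓ₀)

noncomputable def enc {N κ : ℕ} (K : Finset (Fin N)) (hK : K.card = κ)
    (P : Slot k → Prop) (v : Slot k → Fin N) (x : Fin N)
    (hx : x ∈ K ∨ ∃ p, P p ∧ v p = x) : Fin κ ⊕ {p : Slot k // P p} :=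
  if h : x ∈ K then Sum.inl ((K.orderIsoOfFin hK).symm ⟨x, h⟩)
  else Sum.inr ⟨(hx.resolve_left h).choose, (hx.resolve_left h).choose_spec.1⟩

lemma enc_inj {N κ : ℕ} (K : Finset (Fin N)) (hK : K.card = κ)
    (P : Slot k → Prop) (v v' : Slot k → Fin N) (x x' : Fin N)
    (hx : x ∈ K ∨ ∃ p, P p ∧ v p = x) (hx' : x' ∈ K ∨ ∃ p, P p ∧ v' p = x')
    (hvv' : ∀ p, P p → v p = v' p)
    (h : enc K hK P v x hx = enc K hK P v' x' hx') : x = x' := by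
  unfold enc at h
  by_cases h1 : x ∈ K <;> by_cases h2 : x' ∈ K
  · rw [dif_pos h1, dif_pos h2] at h
    have h3 := (K.orderIsoOfFin hK).symm.injective (Sum.inl.inj h)
    exact congrArg Subtype.val h3
  · rw [dif_pos h1, dif_neg h2] at h
    cases h
  · rw [dif_neg h1, dif_pos h2] at h
    cases h
  · rw [dif_neg h1, dif_neg h2] at h
    have h3 : (hx.resolve_left h1).choose = (hx'.resolve_left h2).choose :=
      congrArg Subtype.val (Sum.inr.inj h)
    have e1 := (hx.resolve_left h1).choose_spec
    have e2 := (hx'.resolve_left h2).choose_spec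
    rw [← e1.2, ← e2.2, hvv' _ e1.1, h3]

/-- helper equiv: subtype of a sigma type -/
def subtypeSigma (Q : Slot k → Prop) :
    {p : Slot k // Q p} ≃ Σ α : Fin n, {ℓ : Fin (k α) // Q ⟨α, ℓ⟩} where
  toFun x := ⟨x.1.1, ⟨x.1.2, x.2⟩⟩
  invFun y := ⟨⟨y.1, y.2.1⟩, y.2.2⟩
  left_inv := by rintro ⟨⟨a, b⟩, h⟩; rfl
  right_inv := by rintro ⟨a, b, h⟩; rfl

def finLtEquiv (m t : ℕ) (h : t ≤ m) : {ℓ : Fin m // (ℓ : ℕ) < t} ≃ Fin t where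
  toFun x := ⟨x.1.1, x.2⟩
  invFun y := ⟨⟨y.1, lt_of_lt_of_le y.2 h⟩, y.2⟩
  left_inv := by rintro ⟨⟨a, ha⟩, h⟩; rfl
  right_inv := by rintro ⟨a, ha⟩; rfl

lemma card_before (β : Fin n) (ℓ₀ : ℕ) (hℓ₀ : ℓ₀ ≤ k β) :
    Nat.card {p : Slot k // Before k β ℓ₀ p} =
      (∑ α ∈ Finset.univ.filter (fun α => β < α), k α) + ℓ₀ := by
  classical
  rw [Nat.card_congr (subtypeSigma (Before k β ℓ₀))]
  have hfib : ∀ α : Fin n, Nat.card {ℓ : Fin (k α) // Before k β ℓ₀ ⟨α, ℓ⟩} =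
      if β < α then k α else if α = β then ℓ₀ else 0 := by
    intro α
    rcases lt_trichotomy β α with hlt | heq | hgt
    · rw [if_pos hlt]
      rw [Nat.card_congr (Equiv.subtypeUnivEquiv (p := fun ℓ : Fin (k α) => Before k β ℓ₀ ⟨α, ℓ⟩) (fun ℓ => Or.inl hlt))]
      simp
    · subst heq
      rw [if_neg (lt_irrefl _), if_pos rfl]
      have : ∀ ℓ : Fin (k β), Before k β ℓ₀ ⟨β, ℓ⟩ ↔ (ℓ : ℕ) < ℓ₀ := by
        intro ℓ
        constructor
        · rintro (h | ⟨-, h⟩)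
          · exact absurd h (lt_irrefl _)
          · exact h
        · exact fun h => Or.inr ⟨rfl, h⟩
      rw [Nat.card_congr ((Equiv.subtypeEquivRight this).trans (finLtEquiv _ _ hℓ₀))]
      simp
    · rw [if_neg (not_lt.2 hgt.le), if_neg (ne_of_lt hgt)]
      have : IsEmpty {ℓ : Fin (k α) // Before k β ℓ₀ ⟨α, ℓ⟩} := by
        constructor
        rintro ⟨ℓ, h | ⟨h, -⟩⟩
        · exact absurd h (not_lt.2 hgt.le)
        · exact absurd h (ne_of_lt hgt)
      exact Nat.card_of_isEmpty
  rw [Nat.card_eq_fintype_card, Fintype.card_sigma]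
  have : ∀ α : Fin n, Fintype.card {ℓ : Fin (k α) // Before k β ℓ₀ ⟨α, ℓ⟩} =
      if β < α then k α else if α = β then ℓ₀ else 0 := by
    intro α; rw [← Nat.card_eq_fintype_card]; exact hfib α
  rw [Finset.sum_congr rfl (fun α _ => this α)]
  rw [← Finset.sum_filter_add_sum_filter_not Finset.univ (fun α => β < α)]
  congr 1
  · exact Finset.sum_congr rfl (fun α hα => if_pos (Finset.mem_filter.1 hα).2)
  · have h1 : ∀ α ∈ Finset.univ.filter (fun α => ¬ β < α),
        (if β < α then k α else if α = β then ℓ₀ else 0) = if α = β then ℓ₀ else 0 := by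
      intro α hα; rw [if_neg (Finset.mem_filter.1 hα).2]
    rw [Finset.sum_congr rfl h1, Finset.sum_ite_eq' _ β (fun _ => ℓ₀),
      if_pos (by simp)]

lemma prod_suffix {M : Type*} [CommMonoid M] (k : Fin n → ℕ) (f : ℕ → M) :
    ∏ β : Fin n, ∏ ℓ : Fin (k β),
      f ((∑ α ∈ Finset.univ.filter (fun α => β < α), k α) + ℓ) =
    ∏ s ∈ Finset.range (∑ α, k α), f s := by
  classical
  set c : Fin n → ℕ := fun β => ∑ α ∈ Finset.univ.filter (fun α => β < α), k α with hc
  have fact2 : ∀ β, c β + k β ≤ ∑ α, k α := by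
    intro β
    have hβ : β ∉ Finset.univ.filter (fun α => β < α) := by simp
    have := Finset.sum_insert (f := k) hβ
    calc c β + k β = ∑ α ∈ insert β (Finset.univ.filter (fun α => β < α)), k α := by
          rw [this]; ring
      _ ≤ ∑ α, k α := Finset.sum_le_sum_of_subset (Finset.subset_univ _)
  have fact1 : ∀ β β' : Fin n, β < β' → c β' + k β' ≤ c β := by
    intro β β' hββ'
    have hβ' : β' ∉ Finset.univ.filter (fun α => β' < α) := by simp
    have hsub : insert β' (Finset.univ.filter (fun α => β' < α)) ⊆
        Finset.univ.filter (fun α => β < α) := by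
      intro α hα
      rcases Finset.mem_insert.1 hα with h | h
      · subst h; simp [hββ']
      · simp only [Finset.mem_filter, Finset.mem_univ, true_and] at h ⊢
        exact hββ'.trans h
    calc c β' + k β' = ∑ α ∈ insert β' (Finset.univ.filter (fun α => β' < α)), k α := by
          rw [Finset.sum_insert hβ']; ring
      _ ≤ c β := Finset.sum_le_sum_of_subset hsub
  have hdisj : ∀ β ∈ (Finset.univ : Finset (Fin n)), ∀ β' ∈ Finset.univ, β ≠ β' →
      Disjoint (Finset.Ico (c β) (c β + k β)) (Finset.Ico (c β') (c β' + k β')) := by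
    intro β _ β' _ hne
    rw [Finset.disjoint_left]
    intro a ha ha'
    rw [Finset.mem_Ico] at ha ha'
    rcases hne.lt_or_gt with h | h
    · have := fact1 β β' h; omega
    · have := fact1 β' β h; omega
  have hU : (Finset.univ.biUnion fun β => Finset.Ico (c β) (c β + k β)) =
      Finset.range (∑ α, k α) := by
    apply Finset.eq_of_subset_of_card_le
    · intro a ha
      rw [Finset.mem_biUnion] at ha
      obtain ⟨β, -, hβ⟩ := ha
      rw [Finset.mem_Ico] at hβ
      rw [Finset.mem_range]
      have := fact2 β; omega
    · rw [Finset.card_range, Finset.card_biUnion hdisj]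
      simp
  rw [← hU, Finset.prod_biUnion hdisj]
  apply Finset.prod_congr rfl
  intro β _
  rw [Finset.prod_Ico_eq_prod_range]
  simp only [Nat.add_sub_cancel_left]
  rw [← Fin.prod_univ_eq_prod_range (fun i => f (c β + i)) (k β)]

end CountingAux
namespace CountingAux

def spSlot (n : ℕ) (hn : 0 < n) (k : Fin n → ℕ) (hk : ∀ α, 0 < k α) : Slot k :=
  ⟨⟨0, hn⟩, ⟨k ⟨0, hn⟩ - 1, Nat.sub_lt (hk ⟨0, hn⟩) Nat.one_pos⟩⟩

lemma before_ne_sp {n : ℕ} {k : Fin n → ℕ} (hn : 0 < n) (hk : ∀ α, 0 < k α)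
    (p : Slot k) (h : Before k ⟨0, hn⟩ (k ⟨0, hn⟩ - 1) p) : p ≠ spSlot n hn k hk := by
  rintro rfl
  rcases h with h | ⟨-, h⟩
  · exact absurd h (lt_irrefl _)
  · simp [spSlot] at h

lemma card_before' {n : ℕ} {k : Fin n → ℕ} (β : Fin n) (ℓ₀ : Fin (k β)) :
    Nat.card {p : Slot k // Before k β (ℓ₀ : ℕ) p} =
      (∑ α ∈ Finset.univ.filter (fun α => β < α), k α) + (ℓ₀ : ℕ) :=
  card_before β _ ℓ₀.2.le

lemma card_ne_sp {n : ℕ} (hn : 0 < n) (k : Fin n → ℕ) (hk : ∀ α, 0 < k α) :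
    Nat.card {p : Slot k // p ≠ spSlot n hn k hk} = (∑ α, k α) - 1 := by
  classical
  rw [Nat.card_eq_fintype_card, Fintype.card_subtype_compl, Fintype.card_subtype_eq,
    Fintype.card_sigma]
  simp

lemma c0_add {n : ℕ} (hn : 0 < n) (k : Fin n → ℕ) :
    (∑ α ∈ Finset.univ.filter (fun α => (⟨0, hn⟩ : Fin n) < α), k α) + k ⟨0, hn⟩
      = ∑ α, k α := by
  classical
  rw [← Finset.sum_filter_add_sum_filter_not Finset.univ (fun α => (⟨0, hn⟩ : Fin n) < α) k]
  congr 1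
  have : Finset.univ.filter (fun α => ¬ (⟨0, hn⟩ : Fin n) < α) = {⟨0, hn⟩} := by
    ext α
    simp only [Finset.mem_filter, Finset.mem_univ, true_and, Finset.mem_singleton,
      Fin.lt_def, Fin.ext_iff]
    omega
  rw [this, Finset.sum_singleton]

lemma nat_card_fin (m : ℕ) : Nat.card (Fin m) = m := by
  rw [Nat.card_eq_fintype_card, Fintype.card_fin]

lemma card_finset_card_eq (N κ : ℕ) :
    Nat.card {s : Finset (Fin N) // s.card = κ} = N.choose κ := by
  rw [Nat.card_eq_fintype_card, Fintype.card_finset_len, Fintype.card_fin]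

lemma card_beforeB {n : ℕ} {k : Fin n → ℕ} (hn : 0 < n) (hk : ∀ α, 0 < k α) :
    Nat.card {p : Slot k // Before k ⟨0, hn⟩ (k ⟨0, hn⟩ - 1) p} = (∑ α, k α) - 1 := by
  rw [card_before ⟨0, hn⟩ _ (Nat.sub_le _ _)]
  have h1 := c0_add hn k
  have h2 := hk ⟨0, hn⟩
  omega

end CountingAux
open CountingAux in
/-- Counting lemma: the number of triples `(K, i, j)` for which both combinatorial
conditions (1) and (2) fail is at most `C(N,κ) · κ(κ+1)⋯(κ+S) · N^(S-1)`. -/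
theorem counting_lemma
    (n N κ : ℕ) (hn : 0 < n) (hN : 0 < N) (hκ : 0 < κ) (hκN : κ ≤ N)
    (k : Fin n → ℕ) (hk : ∀ α, 0 < k α)
    (S : ℕ) (hS : S = ∑ α, k α) :
    Nat.card {t : Finset (Fin N) × ((α : Fin n) → Fin (k α) → Fin N) ×
        ((α : Fin n) → Fin (k α) → Fin N) //
      t.1.card = κ ∧
      -- condition (1) fails
      ¬ (∃ β : Fin n, ∃ ℓ₀ : Fin (k β),
          t.2.1 β ℓ₀ ∉ t.1 ∧
          (∀ ℓ : Fin (k β), ℓ < ℓ₀ → t.2.1 β ℓ₀ ≠ t.2.2 β ℓ) ∧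
          (∀ α : Fin n, β < α → ∀ ℓ : Fin (k α), t.2.1 β ℓ₀ ≠ t.2.2 α ℓ)) ∧
      -- condition (2) fails
      ¬ (t.2.2 ⟨0, hn⟩ ⟨k ⟨0, hn⟩ - 1, Nat.sub_lt (hk ⟨0, hn⟩) Nat.one_pos⟩ ∉ t.1 ∧
          (∀ ℓ : Fin (k ⟨0, hn⟩),
            ℓ < (⟨k ⟨0, hn⟩ - 1, Nat.sub_lt (hk ⟨0, hn⟩) Nat.one_pos⟩ : Fin (k ⟨0, hn⟩)) →
            t.2.2 ⟨0, hn⟩ ⟨k ⟨0, hn⟩ - 1, Nat.sub_lt (hk ⟨0, hn⟩) Nat.one_pos⟩ ≠ t.2.2 ⟨0, hn⟩ ℓ) ∧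
          (∀ α : Fin n, (⟨0, hn⟩ : Fin n) < α → ∀ ℓ : Fin (k α),
            t.2.2 ⟨0, hn⟩ ⟨k ⟨0, hn⟩ - 1, Nat.sub_lt (hk ⟨0, hn⟩) Nat.one_pos⟩ ≠ t.2.2 α ℓ))}
      ≤ N.choose κ * (∏ s ∈ Finset.range (S + 1), (κ + s)) * N ^ (S - 1) := by
  classical
  subst hS
  -- the target type of the injection
  let T : Type := {K : Finset (Fin N) // K.card = κ} ×
    ((β : Fin n) → (ℓ₀ : Fin (k β)) → (Fin κ ⊕ {p : Slot k // Before k β (ℓ₀ : ℕ) p})) ×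
    ((Fin κ ⊕ {p : Slot k // Before k ⟨0, hn⟩ (k ⟨0, hn⟩ - 1) p}) ×
     ({p : Slot k // p ≠ spSlot n hn k hk} → Fin N))
  let Φ : {t : Finset (Fin N) × ((α : Fin n) → Fin (k α) → Fin N) ×
        ((α : Fin n) → Fin (k α) → Fin N) //
      t.1.card = κ ∧
      ¬ (∃ β : Fin n, ∃ ℓ₀ : Fin (k β),
          t.2.1 β ℓ₀ ∉ t.1 ∧
          (∀ ℓ : Fin (k β), ℓ < ℓ₀ → t.2.1 β ℓ₀ ≠ t.2.2 β ℓ) ∧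
          (∀ α : Fin n, β < α → ∀ ℓ : Fin (k α), t.2.1 β ℓ₀ ≠ t.2.2 α ℓ)) ∧
      ¬ (t.2.2 ⟨0, hn⟩ ⟨k ⟨0, hn⟩ - 1, Nat.sub_lt (hk ⟨0, hn⟩) Nat.one_pos⟩ ∉ t.1 ∧
          (∀ ℓ : Fin (k ⟨0, hn⟩),
            ℓ < (⟨k ⟨0, hn⟩ - 1, Nat.sub_lt (hk ⟨0, hn⟩) Nat.one_pos⟩ : Fin (k ⟨0, hn⟩)) →
            t.2.2 ⟨0, hn⟩ ⟨k ⟨0, hn⟩ - 1, Nat.sub_lt (hk ⟨0, hn⟩) Nat.one_pos⟩ ≠ t.2.2 ⟨0, hn⟩ ℓ) ∧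
          (∀ α : Fin n, (⟨0, hn⟩ : Fin n) < α → ∀ ℓ : Fin (k α),
            t.2.2 ⟨0, hn⟩ ⟨k ⟨0, hn⟩ - 1, Nat.sub_lt (hk ⟨0, hn⟩) Nat.one_pos⟩ ≠ t.2.2 α ℓ))}
      → T := fun t =>
    ⟨⟨t.1.1, t.2.1⟩,
     fun β ℓ₀ => enc t.1.1 t.2.1 (Before k β (ℓ₀ : ℕ)) (fun p => t.1.2.2 p.1 p.2)
       (t.1.2.1 β ℓ₀)
       (by
         by_contra hcon
         push_neg at hcon
         exact t.2.2.1 ⟨β, ℓ₀, hcon.1,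
           fun ℓ hℓ heq => hcon.2 ⟨β, ℓ⟩ (Or.inr ⟨rfl, hℓ⟩) heq.symm,
           fun α hα ℓ heq => hcon.2 ⟨α, ℓ⟩ (Or.inl hα) heq.symm⟩),
     ⟨enc t.1.1 t.2.1 (Before k ⟨0, hn⟩ (k ⟨0, hn⟩ - 1)) (fun p => t.1.2.2 p.1 p.2)
       (t.1.2.2 ⟨0, hn⟩ ⟨k ⟨0, hn⟩ - 1, Nat.sub_lt (hk ⟨0, hn⟩) Nat.one_pos⟩)
       (by
         by_contra hcon
         push_neg at hcon
         exact t.2.2.2 ⟨hcon.1,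
           fun ℓ hℓ heq => hcon.2 ⟨⟨0, hn⟩, ℓ⟩ (Or.inr ⟨rfl, hℓ⟩) heq.symm,
           fun α hα ℓ heq => hcon.2 ⟨α, ℓ⟩ (Or.inl hα) heq.symm⟩),
      fun p => t.1.2.2 p.1.1 p.1.2⟩⟩
  have hΦ : Function.Injective Φ := by
    rintro ⟨⟨K, i, j⟩, hKc, hc1, hc2⟩ ⟨⟨K', i', j'⟩, hKc', hc1', hc2'⟩ h
    unfold Φ T at h
    simp only [Prod.mk.injEq, Subtype.mk.injEq] at h
    obtain ⟨hKK, h2, h3, h4⟩ := h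
    subst hKK
    have hjC : ∀ p : Slot k, p ≠ spSlot n hn k hk → j p.1 p.2 = j' p.1 p.2 :=
      fun p hp => congrFun h4 ⟨p, hp⟩
    have hjsp : j ⟨0, hn⟩ ⟨k ⟨0, hn⟩ - 1, Nat.sub_lt (hk ⟨0, hn⟩) Nat.one_pos⟩ =
        j' ⟨0, hn⟩ ⟨k ⟨0, hn⟩ - 1, Nat.sub_lt (hk ⟨0, hn⟩) Nat.one_pos⟩ :=
      enc_inj _ _ _ _ _ _ _ _ _
        (fun p hp => hjC p (before_ne_sp hn hk p hp)) h3
    have hj : ∀ (α : Fin n) (ℓ : Fin (k α)), j α ℓ = j' α ℓ := by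
      intro α ℓ
      by_cases hps : (⟨α, ℓ⟩ : Slot k) = spSlot n hn k hk
      · have e1 : j α ℓ = j (spSlot n hn k hk).1 (spSlot n hn k hk).2 :=
          congrArg (fun p : Slot k => j p.1 p.2) hps
        have e2 : j' α ℓ = j' (spSlot n hn k hk).1 (spSlot n hn k hk).2 :=
          congrArg (fun p : Slot k => j' p.1 p.2) hps
        rw [e1, e2]
        exact hjsp
      · exact hjC ⟨α, ℓ⟩ hps
    have hi : ∀ (β : Fin n) (ℓ₀ : Fin (k β)), i β ℓ₀ = i' β ℓ₀ := by
      intro β ℓ₀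
      exact enc_inj _ _ _ _ _ _ _ _ _
        (fun p _ => hj p.1 p.2) (congrFun (congrFun h2 β) ℓ₀)
    obtain rfl : i = i' := funext fun β => funext fun ℓ₀ => hi β ℓ₀
    obtain rfl : j = j' := funext fun α => funext fun ℓ => hj α ℓ
    rfl
  have hcardT : Nat.card T =
      N.choose κ *
        (∏ β : Fin n, ∏ ℓ₀ : Fin (k β),
          (κ + ((∑ α ∈ Finset.univ.filter (fun α => β < α), k α) + (ℓ₀ : ℕ)))) *
        ((κ + ((∑ α, k α) - 1)) * N ^ ((∑ α, k α) - 1)) := by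
    unfold T
    simp only [Nat.card_prod, Nat.card_pi, Nat.card_sum, Nat.card_fun, nat_card_fin,
      card_before', card_beforeB hn hk, card_ne_sp hn k hk, card_finset_card_eq,
      Finset.prod_const, Finset.card_univ, ← Nat.card_eq_fintype_card]
    ring
  calc Nat.card _ ≤ Nat.card T := Nat.card_le_card_of_injective Φ hΦ
    _ = N.choose κ *
        (∏ s ∈ Finset.range (∑ α, k α), (κ + s)) *
        ((κ + ((∑ α, k α) - 1)) * N ^ ((∑ α, k α) - 1)) := by
        rw [hcardT, prod_suffix k (fun s => κ + s)]
    _ ≤ N.choose κ *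
        ((∏ s ∈ Finset.range (∑ α, k α), (κ + s)) * (κ + ∑ α, k α)) *
        N ^ ((∑ α, k α) - 1) := by
        have h1 : κ + ((∑ α, k α) - 1) ≤ κ + ∑ α, k α := by omega
        calc N.choose κ * (∏ s ∈ Finset.range (∑ α, k α), (κ + s)) *
              ((κ + ((∑ α, k α) - 1)) * N ^ ((∑ α, k α) - 1))
            = N.choose κ * ((∏ s ∈ Finset.range (∑ α, k α), (κ + s)) *
              (κ + ((∑ α, k α) - 1))) * N ^ ((∑ α, k α) - 1) := by ring
          _ ≤ _ := by gcongr
    _ = N.choose κ * (∏ s ∈ Finset.range ((∑ α, k α) + 1), (κ + s)) *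
        N ^ ((∑ α, k α) - 1) := by
        rw [Finset.prod_range_succ]
end

section
/- For every real number C > 1 and all integers N ≥ 2 and S ≥ 1, one has ∑_{κ=1}^{N} C(N,κ) · κ(κ+1)⋯(κ+S) · (C/N)^{κ(1 − 1/log N)} ≤ (S+2)(S+1)^{2(S+1)} e^{Ce} (Ce)^{S+1}, where C(N,κ) denotes the binomial coefficient, log denotes the natural logarithm, and e is Euler's number. -/
open Real Finset

private lemma nat_factor (m κ i : ℕ) (h : m ≤ κ) (hi : i < m) : κ ≤ m * (κ - i) := by
  have h1 : i ≤ (m - 1) * (κ - i) := by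
    calc i = i * 1 := (mul_one i).symm
    _ ≤ (m - 1) * (κ - i) := Nat.mul_le_mul (by omega) (by omega)
  have h2 : (m - 1) * (κ - i) + (κ - i) = m * (κ - i) := by
    have : m - 1 + 1 = m := by omega
    calc (m - 1) * (κ - i) + (κ - i) = (m - 1 + 1) * (κ - i) := by ring
    _ = m * (κ - i) := by rw [this]
  omega

private lemma nat_key (m κ : ℕ) (h : m ≤ κ) : κ ^ m * Nat.factorial (κ - m) ≤ m ^ m * Nat.factorial κ := by
  have h1 : κ ^ m ≤ m ^ m * κ.descFactorial m := by
    have : κ ^ m = ∏ _i ∈ range m, κ := by rw [Finset.prod_const, Finset.card_range]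
    have hm : m ^ m * ∏ i ∈ range m, (κ - i) = ∏ i ∈ range m, (m * (κ - i)) := by
      rw [Finset.prod_mul_distrib, Finset.prod_const, Finset.card_range]
    rw [this, Nat.descFactorial_eq_prod_range, hm]
    exact Finset.prod_le_prod' fun i hi => nat_factor m κ i h (Finset.mem_range.mp hi)
  calc κ ^ m * Nat.factorial (κ - m) ≤ m ^ m * κ.descFactorial m * Nat.factorial (κ - m) :=
        Nat.mul_le_mul_right _ h1
    _ = m ^ m * (Nat.factorial (κ - m) * κ.descFactorial m) := by ring
    _ = m ^ m * Nat.factorial κ := by rw [Nat.factorial_mul_descFactorial h]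


/-- For every real `C > 1` and all integers `N ≥ 2`, `S ≥ 1`,
`∑_{κ=1}^N C(N,κ) κ(κ+1)⋯(κ+S) (C/N)^{κ(1-1/log N)}
  ≤ (S+2)(S+1)^{2(S+1)} e^{Ce} (Ce)^{S+1}`. -/
theorem combinatory_inequality (C : ℝ) (hC : 1 < C) (N S : ℕ) (hN : 2 ≤ N) (hS : 1 ≤ S) :
    ∑ κ ∈ Finset.Icc 1 N,
        (N.choose κ : ℝ) * (∏ s ∈ Finset.range (S + 1), ((κ : ℝ) + s)) *
          (C / N) ^ ((κ : ℝ) * (1 - 1 / Real.log N))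
      ≤ (S + 2) * (S + 1) ^ (2 * (S + 1)) * Real.exp (C * Real.exp 1) *
          (C * Real.exp 1) ^ (S + 1) := by
  have hNR : (2:ℝ) ≤ (N:ℝ) := by exact_mod_cast hN
  have hN0 : (0:ℝ) < (N:ℝ) := by linarith
  have hlogN : 0 < Real.log N := Real.log_pos (by linarith)
  have hC0 : (0:ℝ) < C := by linarith
  have he1 : (1:ℝ) < Real.exp 1 := by
    have := Real.exp_one_gt_d9; linarith
  set x := C * Real.exp 1 with hxdef
  have hx1 : 1 < x := by nlinarith
  have hx0 : (0:ℝ) < x := by linarith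
  set m := S + 1 with hmdef
  set t := 1 - 1 / Real.log N with htdef
  have hCN0 : (0:ℝ) < C / N := by positivity
  -- base bound : (C/N)^t ≤ x/N
  have hbase : (C / N : ℝ) ^ t ≤ x / N := by
    have h2 : (N:ℝ) ^ t = N / Real.exp 1 := by
      rw [Real.rpow_def_of_pos hN0]
      have : Real.log N * t = Real.log N - 1 := by
        rw [htdef]; field_simp
      rw [this, Real.exp_sub, Real.exp_log hN0]
    have h3 : C ^ t ≤ C := by
      nth_rewrite 2 [← Real.rpow_one C]
      apply Real.rpow_le_rpow_of_exponent_le hC.le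
      rw [htdef]; have : 0 < 1 / Real.log N := by positivity
      linarith
    have h1 : (C / N : ℝ) ^ t = C ^ t / (N:ℝ) ^ t := Real.div_rpow hC0.le hN0.le t
    rw [h1, h2, div_div_eq_mul_div]
    rw [hxdef]
    have hC0' : 0 < C ^ t := Real.rpow_pos_of_pos hC0 t
    gcongr
  -- per-term bound
  have hterm : ∀ κ ∈ Finset.Icc 1 N,
      (N.choose κ : ℝ) * (∏ s ∈ Finset.range (S + 1), ((κ : ℝ) + s)) *
          (C / N) ^ ((κ : ℝ) * t)
        ≤ ((S:ℝ) + 1) ^ m * ((κ:ℝ) ^ m * x ^ κ / (Nat.factorial κ)) := by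
    intro κ hκ
    obtain ⟨hκ1, hκN⟩ := Finset.mem_Icc.mp hκ
    have hκ0 : (1:ℝ) ≤ (κ:ℝ) := by exact_mod_cast hκ1
    have hpow : (C / N : ℝ) ^ ((κ:ℝ) * t) ≤ (x / N) ^ κ := by
      rw [mul_comm ((κ:ℝ)) t, Real.rpow_mul hCN0.le, Real.rpow_natCast]
      exact pow_le_pow_left₀ (Real.rpow_nonneg hCN0.le t) hbase κ
    have hchoose : (N.choose κ : ℝ) ≤ (N:ℝ) ^ κ / (Nat.factorial κ) := by
      exact_mod_cast Nat.choose_le_pow_div κ N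
    have hprod : ∏ s ∈ Finset.range (S + 1), ((κ : ℝ) + s)
        ≤ ((S:ℝ) + 1) ^ m * (κ:ℝ) ^ m := by
      rw [← mul_pow]
      calc ∏ s ∈ Finset.range (S + 1), ((κ : ℝ) + s)
          ≤ ∏ _s ∈ Finset.range (S + 1), (((S:ℝ) + 1) * κ) := by
            apply Finset.prod_le_prod
            · intro i _; positivity
            · intro i hi
              have hi' : (i:ℝ) ≤ (S:ℝ) := by
                have := Finset.mem_range.mp hi; exact_mod_cast Nat.lt_succ_iff.mp this
              nlinarith
        _ = (((S:ℝ) + 1) * κ) ^ m := by rw [Finset.prod_const, Finset.card_range]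
    have hfrac : (0:ℝ) < (Nat.factorial κ : ℝ) := by positivity
    calc (N.choose κ : ℝ) * (∏ s ∈ Finset.range (S + 1), ((κ : ℝ) + s)) *
          (C / N) ^ ((κ : ℝ) * t)
        ≤ ((N:ℝ) ^ κ / (Nat.factorial κ)) * (((S:ℝ) + 1) ^ m * (κ:ℝ) ^ m) * (x / N) ^ κ := by
          apply mul_le_mul ?_ hpow (Real.rpow_nonneg hCN0.le _) (by positivity)
          apply mul_le_mul hchoose hprod (Finset.prod_nonneg fun i _ => by positivity)
            (by positivity)
      _ = ((S:ℝ) + 1) ^ m * ((κ:ℝ) ^ m * x ^ κ / (Nat.factorial κ)) := by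
          rw [div_pow]
          field_simp
  -- sum bound
  have hsum : ∑ κ ∈ Finset.Icc 1 N, (κ:ℝ) ^ m * x ^ κ / (Nat.factorial κ)
      ≤ (S:ℝ) * ((m:ℝ) ^ m * x ^ m) + (m:ℝ) ^ m * (x ^ m * Real.exp x) := by
    rw [← Finset.sum_filter_add_sum_filter_not (Finset.Icc 1 N) (· ≤ S)]
    apply _root_.add_le_add
    · -- small κ part
      apply (Finset.sum_le_card_nsmul _ _ ((m:ℝ) ^ m * x ^ m) ?_).trans
      · have hcard : ((Finset.Icc 1 N).filter (· ≤ S)).card ≤ S := by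
          have hsub : (Finset.Icc 1 N).filter (· ≤ S) ⊆ Finset.Icc 1 S := by
            intro a ha
            simp only [Finset.mem_filter, Finset.mem_Icc] at ha ⊢
            exact ⟨ha.1.1, ha.2⟩
          calc ((Finset.Icc 1 N).filter (· ≤ S)).card ≤ (Finset.Icc 1 S).card :=
                Finset.card_le_card hsub
            _ = S := by rw [Nat.card_Icc]; omega
        rw [nsmul_eq_mul]
        apply mul_le_mul (by exact_mod_cast hcard) le_rfl (by positivity) (by positivity)
      · intro κ hκ
        simp only [Finset.mem_filter, Finset.mem_Icc] at hκ
        obtain ⟨⟨h1, h2⟩, h3⟩ := hκ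
        have hκm : κ ≤ m := by omega
        have hf1 : (1:ℝ) ≤ (Nat.factorial κ : ℝ) := by
          exact_mod_cast Nat.one_le_iff_ne_zero.mpr (Nat.factorial_ne_zero κ)
        calc (κ:ℝ) ^ m * x ^ κ / (Nat.factorial κ) ≤ (κ:ℝ) ^ m * x ^ κ / 1 := by
              gcongr
          _ = (κ:ℝ) ^ m * x ^ κ := by rw [div_one]
          _ ≤ (m:ℝ) ^ m * x ^ m := by
              have hκm' : (κ:ℝ) ≤ (m:ℝ) := by exact_mod_cast hκm
              apply mul_le_mul (pow_le_pow_left₀ (by positivity) hκm' m)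
                (pow_le_pow_right₀ hx1.le hκm) (by positivity) (by positivity)
    · -- large κ part
      have hstep : ∀ κ ∈ (Finset.Icc 1 N).filter (fun κ => ¬ κ ≤ S),
          (κ:ℝ) ^ m * x ^ κ / (Nat.factorial κ)
            ≤ (m:ℝ) ^ m * (x ^ m * (x ^ (κ - m) / (Nat.factorial (κ - m)))) := by
        intro κ hκ
        simp only [Finset.mem_filter, Finset.mem_Icc, not_le] at hκ
        have hmκ : m ≤ κ := hκ.2
        have hkey := nat_key m κ hmκ
        have hxk : x ^ κ = x ^ m * x ^ (κ - m) := by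
          rw [← pow_add]; congr 1; omega
        rw [div_le_iff₀ (by positivity), hxk]
        have hkeyR : (κ:ℝ) ^ m * (Nat.factorial (κ - m) : ℝ) ≤ (m:ℝ) ^ m * (Nat.factorial κ : ℝ) := by
          exact_mod_cast hkey
        have hxnn : (0:ℝ) ≤ x ^ m * x ^ (κ - m) := by positivity
        have hfnn : (0:ℝ) < (Nat.factorial (κ - m) : ℝ) := by positivity
        rw [← sub_nonneg] at hkeyR ⊢
        have expand : (m:ℝ) ^ m * (x ^ m * (x ^ (κ - m) / ↑(Nat.factorial (κ - m)))) * ↑(Nat.factorial κ)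
            - (κ:ℝ) ^ m * (x ^ m * x ^ (κ - m))
            = (x ^ m * x ^ (κ - m) / ↑(Nat.factorial (κ - m)))
              * ((m:ℝ) ^ m * ↑(Nat.factorial κ) - (κ:ℝ) ^ m * ↑(Nat.factorial (κ - m))) := by
          field_simp
        rw [expand]
        apply mul_nonneg (by positivity) hkeyR
      apply (Finset.sum_le_sum hstep).trans
      rw [← Finset.mul_sum, ← Finset.mul_sum]
      apply mul_le_mul_of_nonneg_left ?_ (by positivity)
      apply mul_le_mul_of_nonneg_left ?_ (by positivity)
      -- reindex
      have hinj : ∀ a ∈ (Finset.Icc 1 N).filter (fun κ => ¬ κ ≤ S), ∀ b ∈ (Finset.Icc 1 N).filter (fun κ => ¬ κ ≤ S),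
          a - m = b - m → a = b := by
        intro a ha b hb hab
        simp only [Finset.mem_filter, Finset.mem_Icc, not_le] at ha hb
        omega
      rw [← Finset.sum_image (f := fun j => x ^ j / (Nat.factorial j)) hinj]
      apply (Finset.sum_le_sum_of_subset_of_nonneg ?_ ?_).trans (Real.sum_le_exp_of_nonneg hx0.le (N + 1))
      · intro j hj
        simp only [Finset.mem_image, Finset.mem_filter, Finset.mem_Icc] at hj
        obtain ⟨a, ⟨⟨_, haN⟩, _⟩, rfl⟩ := hj
        simp only [Finset.mem_range]; omega
      · intro j _ _; positivity
  have hE : (1:ℝ) ≤ Real.exp x := Real.one_le_exp hx0.le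
  have hmR : ((m:ℕ):ℝ) = (S:ℝ) + 1 := by rw [hmdef]; push_cast; ring
  have key : (S:ℝ) + Real.exp x ≤ ((S:ℝ) + 2) * Real.exp x := by
    have hS0 : (0:ℝ) ≤ (S:ℝ) := Nat.cast_nonneg S
    nlinarith
  calc ∑ κ ∈ Finset.Icc 1 N,
        (N.choose κ : ℝ) * (∏ s ∈ Finset.range (S + 1), ((κ : ℝ) + s)) *
          (C / N) ^ ((κ : ℝ) * t)
      ≤ ∑ κ ∈ Finset.Icc 1 N, ((S:ℝ) + 1) ^ m * ((κ:ℝ) ^ m * x ^ κ / (Nat.factorial κ)) :=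
        Finset.sum_le_sum hterm
    _ = ((S:ℝ) + 1) ^ m * ∑ κ ∈ Finset.Icc 1 N, ((κ:ℝ) ^ m * x ^ κ / (Nat.factorial κ)) := by
        rw [← Finset.mul_sum]
    _ ≤ ((S:ℝ) + 1) ^ m * ((S:ℝ) * ((m:ℝ) ^ m * x ^ m) + (m:ℝ) ^ m * (x ^ m * Real.exp x)) :=
        mul_le_mul_of_nonneg_left hsum (by positivity)
    _ = (((S:ℝ) + 1) ^ m) ^ 2 * x ^ m * ((S:ℝ) + Real.exp x) := by rw [hmR]; ring
    _ ≤ (((S:ℝ) + 1) ^ m) ^ 2 * x ^ m * (((S:ℝ) + 2) * Real.exp x) :=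
        mul_le_mul_of_nonneg_left key (by positivity)
    _ = ((S:ℝ) + 2) * ((S:ℝ) + 1) ^ (2 * m) * Real.exp x * x ^ m := by
        rw [show ((((S:ℝ) + 1) ^ m) ^ 2) = ((S:ℝ) + 1) ^ (2 * m) by
          rw [← pow_mul, Nat.mul_comm]]
        ring
end

section
/- For all natural numbers N ≥ 1 and S ≥ 0 and every real number x ≥ 0, one has ∑_{κ=1}^{N} C(N,κ) · κ(κ+1)⋯(κ+S) · x^{κ} ≤ (S+1)^{2(S+1)} (1+x)^{N} ∑_{i=0}^{S+1} (xN)^{S−i+1}. -/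
open Nat Finset

/-- The ascending product equals a factorial times a binomial coefficient. -/
lemma prod_add_eq_choose (κ S : ℕ) :
    ∏ s ∈ Finset.range (S + 1), (κ + s) = (S + 1)! * (κ + S).choose (S + 1) := by
  have h : ∀ k : ℕ, ∏ s ∈ Finset.range k, (κ + s) = κ.ascFactorial k := by
    intro k
    induction k with
    | zero => simp
    | succ n ih => rw [Finset.prod_range_succ, ih, Nat.ascFactorial_succ, mul_comm]
  rw [h, Nat.ascFactorial_eq_factorial_mul_choose']
  congr 2

lemma choose_le_two_pow' (S m : ℕ) : S.choose m ≤ 2 ^ S := by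
  rcases le_or_gt m S with h | h
  · calc S.choose m ≤ ∑ k ∈ Finset.range (S + 1), S.choose k :=
          Finset.single_le_sum (fun i _ => Nat.zero_le _) (by simp [Nat.lt_succ, h])
      _ = 2 ^ S := Nat.sum_range_choose S
  · simp [Nat.choose_eq_zero_of_lt h]

lemma prod_add_le (κ S : ℕ) :
    ∏ s ∈ Finset.range (S + 1), (κ + s)
      ≤ (S + 1)! * 2 ^ S * ∑ j ∈ Finset.range (S + 2), κ.choose j := by
  rw [prod_add_eq_choose, Nat.add_choose_eq,
    Finset.Nat.sum_antidiagonal_eq_sum_range_succ_mk]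
  calc (S + 1)! * ∑ j ∈ Finset.range (S + 1 + 1), κ.choose j * S.choose (S + 1 - j)
      ≤ (S + 1)! * ∑ j ∈ Finset.range (S + 2), κ.choose j * 2 ^ S := by
        apply Nat.mul_le_mul_left
        exact Finset.sum_le_sum fun j _ =>
          Nat.mul_le_mul_left _ (choose_le_two_pow' S _)
    _ = (S + 1)! * 2 ^ S * ∑ j ∈ Finset.range (S + 2), κ.choose j := by
        rw [← Finset.sum_mul]; ring

lemma one_add_pow_eq (N : ℕ) (x : ℝ) :
    ∑ i ∈ Finset.range (N + 1), (N.choose i : ℝ) * x ^ i = (1 + x) ^ N := by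
  rw [add_comm (1 : ℝ) x, add_pow]
  refine Finset.sum_congr rfl fun i _ => ?_
  ring

lemma key_j (N j : ℕ) (x : ℝ) (hx : 0 ≤ x) :
    ∑ κ ∈ Finset.range (N + 1), (N.choose κ : ℝ) * (κ.choose j) * x ^ κ
      ≤ ((N : ℝ) * x) ^ j * (1 + x) ^ N := by
  rcases le_or_gt j N with hj | hj
  · have hsub : Finset.Ico j (N + 1) ⊆ Finset.range (N + 1) := by
      intro a ha; simp only [Finset.mem_Ico] at ha; simp [ha.2]
    have h0 : ∑ κ ∈ Finset.range (N + 1), (N.choose κ : ℝ) * (κ.choose j) * x ^ κ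
        = ∑ κ ∈ Finset.Ico j (N + 1), (N.choose κ : ℝ) * (κ.choose j) * x ^ κ := by
      refine (Finset.sum_subset hsub fun κ hκ hκ' => ?_).symm
      simp only [Finset.mem_range] at hκ
      simp only [Finset.mem_Ico, not_and, not_lt] at hκ'
      have : κ < j := by by_contra h; exact absurd hκ (by omega)
      simp [Nat.choose_eq_zero_of_lt this]
    rw [h0, Finset.sum_Ico_eq_sum_range]
    have hterm : ∀ i ∈ Finset.range (N + 1 - j),
        (N.choose (j + i) : ℝ) * ((j + i).choose j) * x ^ (j + i)
          ≤ ((N : ℝ) ^ j * x ^ j) * ((N.choose i : ℝ) * x ^ i) := by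
      intro i hi
      simp only [Finset.mem_range] at hi
      have hji : j + i ≤ N := by omega
      have hmul : N.choose (j + i) * (j + i).choose j
          = N.choose j * (N - j).choose i := by
        have := Nat.choose_mul (n := N) (Nat.le_add_right j i)
        simpa using this
      have hcast : (N.choose (j + i) : ℝ) * ((j + i).choose j)
          = (N.choose j : ℝ) * ((N - j).choose i) := by
        exact_mod_cast congrArg (Nat.cast : ℕ → ℝ) hmul
      rw [hcast, pow_add]
      have h1 : (N.choose j : ℝ) ≤ (N : ℝ) ^ j := by
        exact_mod_cast Nat.choose_le_pow N j
      have h2 : ((N - j).choose i : ℝ) ≤ (N.choose i : ℝ) := by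
        exact_mod_cast Nat.choose_le_choose i (Nat.sub_le N j)
      calc (N.choose j : ℝ) * ((N - j).choose i) * (x ^ j * x ^ i)
          ≤ (N : ℝ) ^ j * (N.choose i : ℝ) * (x ^ j * x ^ i) := by
            apply mul_le_mul_of_nonneg_right _ (by positivity)
            exact mul_le_mul h1 h2 (by positivity) (by positivity)
        _ = ((N : ℝ) ^ j * x ^ j) * ((N.choose i : ℝ) * x ^ i) := by ring
    calc ∑ i ∈ Finset.range (N + 1 - j),
          (N.choose (j + i) : ℝ) * ((j + i).choose j) * x ^ (j + i)
        ≤ ∑ i ∈ Finset.range (N + 1 - j),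
            ((N : ℝ) ^ j * x ^ j) * ((N.choose i : ℝ) * x ^ i) :=
          Finset.sum_le_sum hterm
      _ = ((N : ℝ) ^ j * x ^ j) *
            ∑ i ∈ Finset.range (N + 1 - j), (N.choose i : ℝ) * x ^ i := by
          rw [Finset.mul_sum]
      _ ≤ ((N : ℝ) ^ j * x ^ j) *
            ∑ i ∈ Finset.range (N + 1), (N.choose i : ℝ) * x ^ i := by
          apply mul_le_mul_of_nonneg_left _ (by positivity)
          apply Finset.sum_le_sum_of_subset_of_nonneg
          · exact Finset.range_subset_range.mpr (by omega)
          · intro i _ _; positivity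
      _ = ((N : ℝ) * x) ^ j * (1 + x) ^ N := by
          rw [one_add_pow_eq, mul_pow]
  · have h0 : ∀ κ ∈ Finset.range (N + 1),
        (N.choose κ : ℝ) * (κ.choose j) * x ^ κ = 0 := by
      intro κ hκ
      simp only [Finset.mem_range] at hκ
      have : κ < j := by omega
      simp [Nat.choose_eq_zero_of_lt this]
    rw [Finset.sum_congr rfl h0]
    simp only [Finset.sum_const, smul_zero]
    positivity

lemma const_le (S : ℕ) : (S + 1)! * 2 ^ S ≤ (S + 1) ^ (2 * (S + 1)) := by
  have h1 : (S + 1)! ≤ (S + 1) ^ (S + 1) := Nat.factorial_le_pow (S + 1)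
  have h2 : 2 ^ S ≤ (S + 1) ^ (S + 1) := by
    cases S with
    | zero => simp
    | succ s =>
        calc 2 ^ (s + 1) ≤ (s + 2) ^ (s + 1) := Nat.pow_le_pow_left (by omega) _
          _ ≤ (s + 2) ^ (s + 2) := Nat.pow_le_pow_right (by omega) (by omega)
  calc (S + 1)! * 2 ^ S ≤ (S + 1) ^ (S + 1) * (S + 1) ^ (S + 1) :=
        Nat.mul_le_mul h1 h2
    _ = (S + 1) ^ (2 * (S + 1)) := by rw [← pow_add]; ring_nf

/-- `∑_{κ=1}^N C(N,κ) κ(κ+1)⋯(κ+S) x^κ ≤ (S+1)^{2(S+1)} (1+x)^N ∑_{i=0}^{S+1} (xN)^{S+1-i}`. -/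
theorem binomial_sum_bound (N S : ℕ) (hN : 1 ≤ N) (x : ℝ) (hx : 0 ≤ x) :
    ∑ κ ∈ Finset.Icc 1 N,
        (N.choose κ : ℝ) * (∏ s ∈ Finset.range (S + 1), ((κ : ℝ) + s)) * x ^ κ
      ≤ (S + 1 : ℝ) ^ (2 * (S + 1)) * (1 + x) ^ N *
          ∑ i ∈ Finset.range (S + 2), (x * N) ^ (S + 1 - i) := by
  have C0 : (0 : ℝ) ≤ ((S + 1)! * 2 ^ S : ℕ) := by positivity
  -- step 1: extend to range (N+1)
  have step1 : ∑ κ ∈ Finset.Icc 1 N,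
        (N.choose κ : ℝ) * (∏ s ∈ Finset.range (S + 1), ((κ : ℝ) + s)) * x ^ κ
      ≤ ∑ κ ∈ Finset.range (N + 1),
        (N.choose κ : ℝ) * (∏ s ∈ Finset.range (S + 1), ((κ : ℝ) + s)) * x ^ κ := by
    apply Finset.sum_le_sum_of_subset_of_nonneg
    · intro a ha; simp only [Finset.mem_Icc] at ha; simp [Nat.lt_succ, ha.2]
    · intro κ _ _
      have hp : (0 : ℝ) ≤ ∏ s ∈ Finset.range (S + 1), ((κ : ℝ) + s) :=
        Finset.prod_nonneg fun s _ => by positivity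
      positivity
  -- step 2: pointwise bound on the product
  have step2 : ∀ κ : ℕ,
      (N.choose κ : ℝ) * (∏ s ∈ Finset.range (S + 1), ((κ : ℝ) + s)) * x ^ κ
        ≤ (((S + 1)! * 2 ^ S : ℕ) : ℝ) *
            ∑ j ∈ Finset.range (S + 2), (N.choose κ : ℝ) * (κ.choose j) * x ^ κ := by
    intro κ
    have hprod : (∏ s ∈ Finset.range (S + 1), ((κ : ℝ) + s))
        = ((∏ s ∈ Finset.range (S + 1), (κ + s) : ℕ) : ℝ) := by push_cast; ring
    have hb : ((∏ s ∈ Finset.range (S + 1), (κ + s) : ℕ) : ℝ)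
        ≤ (((S + 1)! * 2 ^ S : ℕ) : ℝ) * ((∑ j ∈ Finset.range (S + 2), κ.choose j : ℕ) : ℝ) := by
      rw [← Nat.cast_mul]
      exact_mod_cast prod_add_le κ S
    calc (N.choose κ : ℝ) * (∏ s ∈ Finset.range (S + 1), ((κ : ℝ) + s)) * x ^ κ
        ≤ (N.choose κ : ℝ) *
            ((((S + 1)! * 2 ^ S : ℕ) : ℝ) *
              ((∑ j ∈ Finset.range (S + 2), κ.choose j : ℕ) : ℝ)) * x ^ κ := by
          apply mul_le_mul_of_nonneg_right _ (by positivity)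
          apply mul_le_mul_of_nonneg_left _ (by positivity)
          rw [hprod]; exact hb
      _ = (((S + 1)! * 2 ^ S : ℕ) : ℝ) *
            ∑ j ∈ Finset.range (S + 2), (N.choose κ : ℝ) * (κ.choose j) * x ^ κ := by
          push_cast
          rw [Finset.mul_sum, Finset.mul_sum]
          rw [Finset.sum_mul, Finset.mul_sum]
          refine Finset.sum_congr rfl fun j _ => by ring
  -- combine
  have step3 : ∑ κ ∈ Finset.range (N + 1),
        (N.choose κ : ℝ) * (∏ s ∈ Finset.range (S + 1), ((κ : ℝ) + s)) * x ^ κ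
      ≤ (((S + 1)! * 2 ^ S : ℕ) : ℝ) *
          ∑ j ∈ Finset.range (S + 2), ((N : ℝ) * x) ^ j * (1 + x) ^ N := by
    calc ∑ κ ∈ Finset.range (N + 1),
          (N.choose κ : ℝ) * (∏ s ∈ Finset.range (S + 1), ((κ : ℝ) + s)) * x ^ κ
        ≤ ∑ κ ∈ Finset.range (N + 1),
            (((S + 1)! * 2 ^ S : ℕ) : ℝ) *
              ∑ j ∈ Finset.range (S + 2), (N.choose κ : ℝ) * (κ.choose j) * x ^ κ :=
          Finset.sum_le_sum fun κ _ => step2 κ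
      _ = (((S + 1)! * 2 ^ S : ℕ) : ℝ) *
            ∑ j ∈ Finset.range (S + 2),
              ∑ κ ∈ Finset.range (N + 1), (N.choose κ : ℝ) * (κ.choose j) * x ^ κ := by
          rw [← Finset.mul_sum, Finset.sum_comm]
      _ ≤ (((S + 1)! * 2 ^ S : ℕ) : ℝ) *
            ∑ j ∈ Finset.range (S + 2), ((N : ℝ) * x) ^ j * (1 + x) ^ N := by
          apply mul_le_mul_of_nonneg_left _ C0
          exact Finset.sum_le_sum fun j _ => key_j N j x hx
  -- final arithmetic
  have hsum : ∑ i ∈ Finset.range (S + 2), (x * (N : ℝ)) ^ (S + 1 - i)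
      = ∑ j ∈ Finset.range (S + 2), ((N : ℝ) * x) ^ j := by
    have := Finset.sum_range_reflect (fun j => ((N : ℝ) * x) ^ j) (S + 2)
    rw [← this]
    refine Finset.sum_congr rfl fun i hi => ?_
    rw [mul_comm x (N : ℝ)]
    congr 1
  have hconst : (((S + 1)! * 2 ^ S : ℕ) : ℝ) ≤ (S + 1 : ℝ) ^ (2 * (S + 1)) := by
    have := const_le S
    have h : (((S + 1)! * 2 ^ S : ℕ) : ℝ) ≤ (((S + 1) ^ (2 * (S + 1)) : ℕ) : ℝ) := by
      exact_mod_cast this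
    calc (((S + 1)! * 2 ^ S : ℕ) : ℝ) ≤ (((S + 1) ^ (2 * (S + 1)) : ℕ) : ℝ) := h
      _ = (S + 1 : ℝ) ^ (2 * (S + 1)) := by push_cast; ring
  have hfin : (((S + 1)! * 2 ^ S : ℕ) : ℝ) *
        ∑ j ∈ Finset.range (S + 2), ((N : ℝ) * x) ^ j * (1 + x) ^ N
      ≤ (S + 1 : ℝ) ^ (2 * (S + 1)) * (1 + x) ^ N *
          ∑ i ∈ Finset.range (S + 2), (x * N) ^ (S + 1 - i) := by
    rw [hsum]
    have hrw : ∑ j ∈ Finset.range (S + 2), ((N : ℝ) * x) ^ j * (1 + x) ^ N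
        = (1 + x) ^ N * ∑ j ∈ Finset.range (S + 2), ((N : ℝ) * x) ^ j := by
      rw [Finset.mul_sum]; exact Finset.sum_congr rfl fun j _ => by ring
    rw [hrw, ← mul_assoc]
    apply mul_le_mul_of_nonneg_right _ (by positivity)
    apply mul_le_mul_of_nonneg_right hconst (by positivity)
  exact le_trans step1 (le_trans step3 hfin)
end

section
/- For all positive integers p and m, one has the factorial inequality ((pm)!)^{1/(2p)} / m! < (2pm)^{−m/2} (8 e² p)^{m}, where e is Euler's number and the powers are real powers. -/
/-- Stirling-type inequality: `((pm)!)^{1/(2p)} / m! < (2pm)^{-m/2} (8e²p)^m`. -/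
theorem factorial_stirling_bound (p m : ℕ) (hp : 0 < p) (hm : 0 < m) :
    ((Nat.factorial (p * m) : ℝ)) ^ ((1 : ℝ) / (2 * p)) / (Nat.factorial m : ℝ)
      < ((2 * p * m : ℝ)) ^ (-(m : ℝ) / 2) * (8 * Real.exp 1 ^ 2 * p) ^ (m : ℝ) := by
  have hp1 : (1:ℝ) ≤ (p:ℝ) := by exact_mod_cast hp
  have hm1 : (1:ℝ) ≤ (m:ℝ) := by exact_mod_cast hm
  have hp0 : (0:ℝ) < (p:ℝ) := by linarith
  have hm0 : (0:ℝ) < (m:ℝ) := by linarith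
  have hpm : (0:ℝ) < (p:ℝ) * m := by positivity
  have hfacpos : (0:ℝ) < (Nat.factorial m : ℝ) := by
    exact_mod_cast Nat.factorial_pos m
  -- Step A:  ((pm)!)^{1/(2p)} ≤ (pm)^{m/2}
  have hfle : ((Nat.factorial (p*m) : ℝ)) ≤ ((p:ℝ)*m) ^ (p*m : ℕ) := by
    have := Nat.factorial_le_pow (p*m)
    have h2 : ((Nat.factorial (p*m) : ℝ)) ≤ (((p*m) ^ (p*m) : ℕ) : ℝ) := by
      exact_mod_cast this
    simpa [Nat.cast_pow, Nat.cast_mul] using h2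
  have h1 : ((Nat.factorial (p*m) : ℝ)) ^ ((1:ℝ)/(2*p)) ≤ ((p:ℝ)*m) ^ ((m:ℝ)/2) :=
    calc ((Nat.factorial (p*m) : ℝ)) ^ ((1:ℝ)/(2*p))
        ≤ (((p:ℝ)*m) ^ (p*m : ℕ)) ^ ((1:ℝ)/(2*p)) :=
          Real.rpow_le_rpow (by positivity) hfle (by positivity)
      _ = ((p:ℝ)*m) ^ (((p*m : ℕ) : ℝ) * ((1:ℝ)/(2*p))) := by
          rw [← Real.rpow_natCast ((p:ℝ)*m) (p*m), ← Real.rpow_mul hpm.le]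
      _ = ((p:ℝ)*m) ^ ((m:ℝ)/2) := by
          congr 1
          push_cast
          field_simp
  -- Step B:  m^m ≤ e^m · m!
  have hB : ((m:ℝ)) ^ m ≤ Real.exp m * (Nat.factorial m : ℝ) := by
    have := Real.pow_div_factorial_le_exp (x := (m:ℝ)) hm0.le m
    rw [div_le_iff₀ hfacpos] at this
    linarith [this]
  -- so  1/m! ≤ exp m / m^m
  have hinv : (1:ℝ) / (Nat.factorial m : ℝ) ≤ Real.exp m / ((m:ℝ)) ^ m := by
    rw [div_le_div_iff₀ hfacpos (by positivity)]
    linarith [hB]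
  -- Step C: the remaining strict inequality
  have hC : ((p:ℝ)*m) ^ ((m:ℝ)/2) * (Real.exp m / ((m:ℝ)) ^ m)
      < ((2 * p * m : ℝ)) ^ (-(m : ℝ) / 2) * (8 * Real.exp 1 ^ 2 * p) ^ (m : ℝ) := by
    have h2pm : (0:ℝ) < 2 * p * m := by positivity
    have h8ep : (0:ℝ) < 8 * Real.exp 1 ^ 2 * (p:ℝ) := by positivity
    have e1 : ((p:ℝ)*m) ^ ((m:ℝ)/2) = Real.exp ((m/2) * Real.log ((p:ℝ)*m)) := by
      rw [Real.rpow_def_of_pos hpm]; ring_nf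
    have e2 : ((m:ℝ)) ^ m = Real.exp ((m:ℝ) * Real.log m) := by
      rw [← Real.rpow_natCast ((m:ℝ)) m, Real.rpow_def_of_pos hm0]; ring_nf
    have e3 : ((2 * p * m : ℝ)) ^ (-(m : ℝ) / 2)
        = Real.exp ((-(m:ℝ)/2) * Real.log (2*p*m)) := by
      rw [Real.rpow_def_of_pos h2pm]; ring_nf
    have e4 : (8 * Real.exp 1 ^ 2 * (p:ℝ)) ^ (m : ℝ)
        = Real.exp ((m:ℝ) * Real.log (8 * Real.exp 1 ^ 2 * p)) := by
      rw [Real.rpow_def_of_pos h8ep]; ring_nf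
    rw [e1, e2, e3, e4, ← Real.exp_sub, ← Real.exp_add, ← Real.exp_add, Real.exp_lt_exp]
    have l1 : Real.log ((p:ℝ)*m) = Real.log p + Real.log m :=
      Real.log_mul (by positivity) (by positivity)
    have l2 : Real.log (2*(p:ℝ)*m) = Real.log 2 + Real.log p + Real.log m := by
      rw [Real.log_mul (by positivity) (by positivity),
        Real.log_mul (by positivity) (by positivity)]
    have l3 : Real.log (8 * Real.exp 1 ^ 2 * (p:ℝ)) = 3 * Real.log 2 + 2 + Real.log p := by
      rw [Real.log_mul (by positivity) (by positivity),
        Real.log_mul (by positivity) (by positivity)]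
      have : (8:ℝ) = 2 ^ (3:ℕ) := by norm_num
      rw [this, Real.log_pow]
      have : Real.log (Real.exp 1 ^ 2) = 2 := by
        rw [← Real.exp_nat_mul, Real.log_exp]; norm_num
      rw [this]; push_cast; ring
    rw [l1, l2, l3]
    have hl2 : 0 < Real.log 2 := Real.log_pos (by norm_num)
    nlinarith [mul_pos hm0 hl2]
  -- combine
  calc ((Nat.factorial (p * m) : ℝ)) ^ ((1 : ℝ) / (2 * p)) / (Nat.factorial m : ℝ)
      = ((Nat.factorial (p * m) : ℝ)) ^ ((1 : ℝ) / (2 * p)) * (1 / (Nat.factorial m : ℝ)) := by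
        ring
    _ ≤ ((p:ℝ)*m) ^ ((m:ℝ)/2) * (Real.exp m / ((m:ℝ)) ^ m) := by
        apply mul_le_mul h1 hinv (by positivity) (by positivity)
    _ < _ := hC
end

section
/- Let B : ℝ → ℝ be continuous on [0,1] with B(1) ≠ 0, and define 𝔅(u) = ∫₀ᵘ B(r) dr for u ∈ [0,1]. Assume 𝔅(1) = 0 and 𝔅(u) > 0 for all u ∈ (0,1). Let F : ℝ → ℝ be differentiable with 0 < F(x) < 1 for all x, F(x) → 1 as x → ∞, and F'(x) = 𝔅(F(x)) for all x. Then F is twice differentiable and lim_{x → ∞} (1 − F(x)) F''(x) / F'(x)² = −1; that is, F satisfies the von Mises condition for the Gumbel maximum domain of attraction with upper endpoint +∞. -/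
open Filter

/-- Von Mises condition for the stationary rank-based distribution function:
if `F' = 𝔅 ∘ F` with `𝔅(u) = ∫₀ᵘ B`, `B` continuous on `[0,1]`, `B(1) ≠ 0`, `𝔅(1) = 0`,
`𝔅 > 0` on `(0,1)`, `0 < F < 1` and `F → 1` at `+∞`, then `F` is twice differentiable and
`(1 - F)F'' / (F')² → -1` at `+∞`. -/
theorem von_mises_condition (B : ℝ → ℝ) (hB : ContinuousOn B (Set.Icc 0 1)) (hB1 : B 1 ≠ 0)
    (h𝔅1 : (∫ r in (0:ℝ)..1, B r) = 0)
    (h𝔅pos : ∀ u ∈ Set.Ioo (0:ℝ) 1, 0 < ∫ r in (0:ℝ)..u, B r)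
    (F : ℝ → ℝ) (hF : Differentiable ℝ F)
    (hF01 : ∀ x : ℝ, 0 < F x ∧ F x < 1)
    (hFlim : Tendsto F atTop (nhds 1))
    (hF' : ∀ x : ℝ, deriv F x = ∫ r in (0:ℝ)..F x, B r) :
    Differentiable ℝ (deriv F) ∧
      Tendsto (fun x : ℝ => (1 - F x) * deriv (deriv F) x / (deriv F x) ^ 2)
        atTop (nhds (-1)) := by
  set G : ℝ → ℝ := fun u => ∫ r in (0:ℝ)..u, B r with hG
  -- G has derivative B u at each u in (0,1)
  have hGderiv : ∀ u ∈ Set.Ioo (0:ℝ) 1, HasDerivAt G (B u) u := by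
    intro u hu
    have hint : IntervalIntegrable B MeasureTheory.volume 0 u := by
      apply ContinuousOn.intervalIntegrable
      apply hB.mono
      rw [Set.uIcc_of_le hu.1.le]
      exact Set.Icc_subset_Icc le_rfl hu.2.le
    have hmeas : StronglyMeasurableAtFilter B (nhds u) MeasureTheory.volume :=
      ⟨Set.Icc 0 1, Icc_mem_nhds hu.1 hu.2, hB.aestronglyMeasurable measurableSet_Icc⟩
    have hcont : ContinuousAt B u := hB.continuousAt (Icc_mem_nhds hu.1 hu.2)
    exact intervalIntegral.integral_hasDerivAt_right hint hmeas hcont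
  -- second derivative
  have hF2 : ∀ x : ℝ, HasDerivAt (deriv F) (B (F x) * G (F x)) x := by
    intro x
    have h1 : HasDerivAt (fun y => G (F y)) (B (F x) * deriv F x) x :=
      (hGderiv (F x) ⟨(hF01 x).1, (hF01 x).2⟩).comp x (hF x).hasDerivAt
    have h2 : deriv F = fun y => G (F y) := funext fun y => hF' y
    rw [h2]
    rw [hF' x] at h1
    exact h1
  refine ⟨fun x => (hF2 x).differentiableAt, ?_⟩
  have hG1 : G 1 = 0 := h𝔅1
  -- slope limit: G u / (1 - u) → -B 1 as u → 1⁻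
  have hGpos : ∀ u ∈ Set.Ioo (0:ℝ) 1, 0 < G u := h𝔅pos
  have hderivL : HasDerivWithinAt G (B 1) (Set.Iio 1) 1 := by
    have hint : IntervalIntegrable B MeasureTheory.volume 0 1 := by
      apply ContinuousOn.intervalIntegrable
      rwa [Set.uIcc_of_le zero_le_one]
    have hmem : Set.Icc (0:ℝ) 1 ∈ nhdsWithin (1:ℝ) (Set.Iic 1) := by
      rw [mem_nhdsWithin]
      exact ⟨Set.Ioi 0, isOpen_Ioi, Set.mem_Ioi.mpr zero_lt_one, by
        intro y hy
        exact ⟨hy.1.le, hy.2⟩⟩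
    have hmeas : StronglyMeasurableAtFilter B (nhdsWithin 1 (Set.Iic 1)) MeasureTheory.volume :=
      ⟨Set.Icc 0 1, hmem, hB.aestronglyMeasurable measurableSet_Icc⟩
    have hcont : ContinuousWithinAt B (Set.Iic 1) 1 :=
      (hB 1 ⟨zero_le_one, le_rfl⟩).mono_of_mem_nhdsWithin hmem
    exact (intervalIntegral.integral_hasDerivWithinAt_right hint hmeas hcont).mono
      Set.Iio_subset_Iic_self
  have hslope : Tendsto (fun u => G u / (1 - u)) (nhdsWithin 1 (Set.Iio 1)) (nhds (-B 1)) := by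
    have h := (hasDerivWithinAt_iff_tendsto_slope.mp hderivL)
    have hset : Set.Iio (1:ℝ) \ {1} = Set.Iio 1 := by
      ext y
      simp only [Set.mem_diff, Set.mem_Iio, Set.mem_singleton_iff]
      exact ⟨fun h => h.1, fun h => ⟨h, ne_of_lt h⟩⟩
    rw [hset] at h
    have : Tendsto (fun u => -(slope G 1 u)) (nhdsWithin 1 (Set.Iio 1)) (nhds (-B 1)) := h.neg
    refine this.congr' ?_
    filter_upwards [self_mem_nhdsWithin] with u hu
    have hu1 : u - 1 ≠ 0 := sub_ne_zero.mpr (ne_of_lt hu)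
    have h1u : (1:ℝ) - u ≠ 0 := sub_ne_zero.mpr (ne_of_lt hu).symm
    rw [slope_def_field, hG1, sub_zero, neg_div', div_eq_div_iff hu1 h1u]
    ring
  -- B u → B 1 as u → 1⁻
  have hBcont : Tendsto B (nhdsWithin 1 (Set.Iio 1)) (nhds (B 1)) := by
    have h1 : ContinuousWithinAt B (Set.Iio 1) 1 := by
      apply (hB 1 ⟨zero_le_one, le_rfl⟩).mono_of_mem_nhdsWithin
      rw [mem_nhdsWithin]
      exact ⟨Set.Ioi 0, isOpen_Ioi, Set.mem_Ioi.mpr zero_lt_one, fun y hy => ⟨hy.1.le, hy.2.le⟩⟩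
    exact h1
  -- ratio limit
  have hratio : Tendsto (fun u => B u / (G u / (1 - u))) (nhdsWithin 1 (Set.Iio 1))
      (nhds (-1)) := by
    have := hBcont.div hslope (by simpa using hB1)
    have heq : B 1 / (-B 1) = -1 := by field_simp
    rwa [heq] at this
  -- F tends to 1 within Iio 1
  have hFto : Tendsto F atTop (nhdsWithin 1 (Set.Iio 1)) :=
    tendsto_nhdsWithin_iff.mpr ⟨hFlim, Eventually.of_forall fun x => (hF01 x).2⟩
  have hcomp := hratio.comp hFto
  refine hcomp.congr fun x => ?_
  have hx := hF01 x
  have hGx : 0 < G (F x) := hGpos (F x) ⟨hx.1, hx.2⟩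
  have h1F : (1:ℝ) - F x ≠ 0 := sub_ne_zero.mpr (ne_of_lt hx.2).symm
  have hd2 : deriv (deriv F) x = B (F x) * G (F x) := (hF2 x).deriv
  have hd1 : deriv F x = G (F x) := hF' x
  simp only [Function.comp, hd2, hd1]
  field_simp
end
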